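/- arXiv:2302.05188 — 7 statements merged into one kernel-verified Lean document; each statement's English description precedes it below -/
import Mathlib

section
/- For all 1 ≤ j ≤ n ≤ N the complementary discrete kernels satisfy 0 ≤ P^{n,j} ≤ Γ(2−α) Δt_j^α. -/
open Real Finset

noncomputable def kk (β t : ℝ) : ℝ := t ^ (β - 1) / Real.Gamma β

noncomputable def Kd (α : ℝ) (t : ℕ → ℝ) (n j : ℕ) : ℝ :=
  (kk (2 - α) (t n - t (j - 1)) - kk (2 - α) (t n - t j)) / (t j - t (j - 1))

noncomputable def Paux (α : ℝ) (t : ℕ → ℝ) (n : ℕ) : ℕ → ℝ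
  | 0 => 1 / Kd α t n n
  | (m + 1) =>
      (1 / Kd α t (n - (m + 1)) (n - (m + 1))) *
        ∑ r ∈ (Finset.range (m + 1)).attach,
          Paux α t n r.1 *
            (Kd α t (n - r.1) (n - m) - Kd α t (n - r.1) (n - (m + 1)))
  decreasing_by exact Finset.mem_range.mp r.2

noncomputable def Pd (α : ℝ) (t : ℕ → ℝ) (n i : ℕ) : ℝ := Paux α t n (n - i)

noncomputable def Dd {H : Type*} [AddCommGroup H] [Module ℝ H]
    (α : ℝ) (t : ℕ → ℝ) (φ : ℕ → H) (n : ℕ) : H :=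
  ∑ j ∈ Finset.Icc 1 n, Kd α t n j • (φ j - φ (j - 1))

noncomputable def mlE (α z : ℝ) : ℝ := ∑' k : ℕ, z ^ k / Real.Gamma (α * k + 1)

section AuxLemmas

variable {α : ℝ} {N : ℕ} {t : ℕ → ℝ}

lemma kk_strictMono (hα0 : 0 < α) (hα1 : α < 1) {a b : ℝ} (ha : 0 ≤ a) (hab : a < b) :
    kk (2 - α) a < kk (2 - α) b := by
  have hΓ : 0 < Real.Gamma (2 - α) := Real.Gamma_pos_of_pos (by linarith)
  unfold kk
  exact div_lt_div_of_pos_right (Real.rpow_lt_rpow ha hab (by linarith)) hΓ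

lemma kk_slope (hα0 : 0 < α) (hα1 : α < 1) {a c b : ℝ} (ha : 0 ≤ a) (hac : a < c)
    (hcb : c < b) :
    (kk (2 - α) b - kk (2 - α) c) / (b - c) ≤ (kk (2 - α) c - kk (2 - α) a) / (c - a) := by
  have hΓ : 0 < Real.Gamma (2 - α) := Real.Gamma_pos_of_pos (by linarith)
  have hconc : ConcaveOn ℝ (Set.Ici 0) fun x : ℝ ↦ x ^ (1 - α) :=
    (Real.strictConcaveOn_rpow (by linarith) (by linarith)).concaveOn
  have hb : (0:ℝ) ≤ b := by linarith
  have h := hconc.slope_anti_adjacent (Set.mem_Ici.mpr ha) (Set.mem_Ici.mpr hb) hac hcb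
  unfold kk
  have e : (2:ℝ) - α - 1 = 1 - α := by ring
  rw [e, div_sub_div_same, div_sub_div_same, div_right_comm,
    div_right_comm (c ^ ((1:ℝ)-α) - a ^ ((1:ℝ)-α))]
  exact (div_le_div_iff_of_pos_right hΓ).mpr h

lemma t_mono (hmono : ∀ i, 1 ≤ i → i ≤ N → t (i - 1) < t i) :
    ∀ b ≤ N, ∀ a ≤ b, t a ≤ t b := by
  intro b hb
  induction b with
  | zero => intro a ha; simp [Nat.le_zero.mp ha]
  | succ k ih =>
    intro a ha
    rcases Nat.lt_succ_iff_lt_or_eq.mp (Nat.lt_succ_of_le ha) with h | h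
    · have h1 : t a ≤ t k := ih (by omega) a (by omega)
      have h2 : t k < t (k + 1) := by
        have := hmono (k + 1) (by omega) hb
        simpa using this
      linarith
    · simp [h]

lemma Kd_pos (hα0 : 0 < α) (hα1 : α < 1) (ht0 : t 0 = 0)
    (hmono : ∀ i, 1 ≤ i → i ≤ N → t (i - 1) < t i)
    {n j : ℕ} (hj : 1 ≤ j) (hjn : j ≤ n) (hnN : n ≤ N) : 0 < Kd α t n j := by
  have hΔ : 0 < t j - t (j - 1) := sub_pos.mpr (hmono j hj (le_trans hjn hnN))
  have htj : t j ≤ t n := t_mono hmono n hnN j hjn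
  have ha : 0 ≤ t n - t j := by linarith
  have hab : t n - t j < t n - t (j - 1) := by
    have := hmono j hj (le_trans hjn hnN); linarith
  exact div_pos (sub_pos.mpr (kk_strictMono hα0 hα1 ha hab)) hΔ

lemma Kd_mono (hα0 : 0 < α) (hα1 : α < 1) (ht0 : t 0 = 0)
    (hmono : ∀ i, 1 ≤ i → i ≤ N → t (i - 1) < t i)
    {i j : ℕ} (hi : 1 ≤ i) (hij : i + 1 ≤ j) (hjN : j ≤ N) :
    Kd α t j i ≤ Kd α t j (i + 1) := by
  have ha : 0 ≤ t j - t (i + 1) := sub_nonneg.mpr (t_mono hmono j hjN (i+1) hij)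
  have h1 : t i < t (i + 1) := by
    have := hmono (i + 1) (by omega) (le_trans hij hjN); simpa using this
  have h2 : t (i - 1) < t i := hmono i hi (by omega)
  have hac : t j - t (i + 1) < t j - t i := by linarith
  have hcb : t j - t i < t j - t (i - 1) := by linarith
  have key := kk_slope hα0 hα1 ha hac hcb
  unfold Kd
  have e1 : i + 1 - 1 = i := by omega
  rw [e1]
  have e2 : t (i + 1) - t i = (t j - t i) - (t j - t (i + 1)) := by ring
  have e3 : t i - t (i - 1) = (t j - t (i - 1)) - (t j - t i) := by ring
  rw [e2, e3]
  exact key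

lemma key_lemma (hα0 : 0 < α) (hα1 : α < 1) (ht0 : t 0 = 0)
    (hmono : ∀ i, 1 ≤ i → i ≤ N → t (i - 1) < t i) :
    ∀ m n, m < n → n ≤ N →
      (∀ r ≤ m, 0 ≤ Paux α t n r) ∧
      ∑ r ∈ Finset.range (m + 1), Paux α t n r * Kd α t (n - r) (n - m) = 1 := by
  intro m
  induction m with
  | zero =>
    intro n hn hnN
    have hK : 0 < Kd α t n n := Kd_pos hα0 hα1 ht0 hmono (by omega) le_rfl hnN
    constructor
    · intro r hr
      interval_cases r
      simp only [Paux]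
      positivity
    · have h0 : Paux α t n 0 = 1 / Kd α t n n := by simp [Paux]
      rw [Finset.sum_range_one, Nat.sub_zero, h0]
      field_simp
  | succ m ih =>
    intro n hn hnN
    have hm : m < n := by omega
    obtain ⟨ihpos, ihsum⟩ := ih n hm hnN
    have hi1 : 1 ≤ n - (m + 1) := by omega
    have hKii : 0 < Kd α t (n - (m + 1)) (n - (m + 1)) :=
      Kd_pos hα0 hα1 ht0 hmono hi1 le_rfl (by omega)
    -- each difference is nonnegative
    have hdiff : ∀ r ≤ m,
        0 ≤ Kd α t (n - r) (n - m) - Kd α t (n - r) (n - (m + 1)) := by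
      intro r hr
      have e : n - m = (n - (m + 1)) + 1 := by omega
      rw [e]
      refine sub_nonneg.mpr (Kd_mono hα0 hα1 ht0 hmono hi1 (by omega) (by omega))
    have hPsucc : Paux α t n (m + 1) =
        (1 / Kd α t (n - (m + 1)) (n - (m + 1))) *
          ∑ r ∈ Finset.range (m + 1),
            Paux α t n r * (Kd α t (n - r) (n - m) - Kd α t (n - r) (n - (m + 1))) := by
      rw [Paux]
      congr 1
      exact Finset.sum_attach (Finset.range (m + 1))
        (fun r => Paux α t n r * (Kd α t (n - r) (n - m) - Kd α t (n - r) (n - (m + 1))))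
    have hSnonneg : 0 ≤ ∑ r ∈ Finset.range (m + 1),
        Paux α t n r * (Kd α t (n - r) (n - m) - Kd α t (n - r) (n - (m + 1))) := by
      refine Finset.sum_nonneg fun r hr => ?_
      have hr' : r ≤ m := Nat.lt_succ_iff.mp (Finset.mem_range.mp hr)
      exact mul_nonneg (ihpos r hr') (hdiff r hr')
    constructor
    · intro r hr
      rcases Nat.lt_succ_iff_lt_or_eq.mp (Nat.lt_succ_of_le hr) with h | h
      · exact ihpos r (by omega)
      · rw [h, hPsucc]
        exact mul_nonneg (by positivity) hSnonneg
    · rw [Finset.sum_range_succ, hPsucc]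
      have hKne : Kd α t (n - (m + 1)) (n - (m + 1)) ≠ 0 := ne_of_gt hKii
      have hcancel : (1 / Kd α t (n - (m + 1)) (n - (m + 1)) *
          ∑ r ∈ Finset.range (m + 1),
            Paux α t n r * (Kd α t (n - r) (n - m) - Kd α t (n - r) (n - (m + 1)))) *
          Kd α t (n - (m + 1)) (n - (m + 1)) =
          ∑ r ∈ Finset.range (m + 1),
            Paux α t n r * (Kd α t (n - r) (n - m) - Kd α t (n - r) (n - (m + 1))) := by
        field_simp
      rw [hcancel, ← Finset.sum_add_distrib, ← ihsum]
      exact Finset.sum_congr rfl fun r _ => by ring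

end AuxLemmas

/-- bounds for the complementary discrete kernels:
`0 ≤ P^{n,j} ≤ Γ(2-α) Δt_j^α`. -/
theorem stmt2 (α : ℝ) (hα0 : 0 < α) (hα1 : α < 1) (N : ℕ) (hN : 1 ≤ N)
    (t : ℕ → ℝ) (ht0 : t 0 = 0)
    (hmono : ∀ i, 1 ≤ i → i ≤ N → t (i - 1) < t i) :
    ∀ n j, 1 ≤ j → j ≤ n → n ≤ N →
      0 ≤ Pd α t n j ∧ Pd α t n j ≤ Real.Gamma (2 - α) * (t j - t (j - 1)) ^ α := by
  intro n j hj hjn hnN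
  have hΓ : 0 < Real.Gamma (2 - α) := Real.Gamma_pos_of_pos (by linarith)
  have hΔ : 0 < t j - t (j - 1) := sub_pos.mpr (hmono j hj (le_trans hjn hnN))
  obtain ⟨hpos, hsum⟩ := key_lemma hα0 hα1 ht0 hmono (n - j) n (by omega) hnN
  have hjj : n - (n - j) = j := by omega
  rw [hjj] at hsum
  have hPd : Pd α t n j = Paux α t n (n - j) := rfl
  refine ⟨hPd ▸ hpos (n - j) le_rfl, ?_⟩
  have hterm : Paux α t n (n - j) * Kd α t (n - (n - j)) j ≤ 1 := by
    rw [← hsum]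
    refine Finset.single_le_sum (f := fun r => Paux α t n r * Kd α t (n - r) j) ?_ ?_
    · intro r hr
      have hr' : r ≤ n - j := Nat.lt_succ_iff.mp (Finset.mem_range.mp hr)
      have hK : 0 < Kd α t (n - r) j := Kd_pos hα0 hα1 ht0 hmono hj (by omega) (by omega)
      exact mul_nonneg (hpos r hr') hK.le
    · exact Finset.mem_range.mpr (by omega)
  rw [hjj] at hterm
  have hKjjpos : 0 < Kd α t j j := Kd_pos hα0 hα1 ht0 hmono hj le_rfl (le_trans hjn hnN)
  have hKjj : Kd α t j j =
      (t j - t (j - 1)) ^ ((1:ℝ) - α) / Real.Gamma (2 - α) / (t j - t (j - 1)) := by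
    unfold Kd kk
    rw [sub_self, Real.zero_rpow (by intro h; rw [sub_eq_zero] at h; linarith), zero_div,
      sub_zero]
    norm_num
    rw [show (2:ℝ) - α - 1 = 1 - α by ring]
  have hpow : (t j - t (j - 1)) ^ α * (t j - t (j - 1)) ^ ((1:ℝ) - α) = t j - t (j - 1) := by
    rw [← Real.rpow_add hΔ]
    norm_num
  have hprod : Real.Gamma (2 - α) * (t j - t (j - 1)) ^ α * Kd α t j j = 1 := by
    rw [hKjj]
    field_simp
    rw [hpow]
  have : Pd α t n j * Kd α t j j ≤ (Real.Gamma (2 - α) * (t j - t (j - 1)) ^ α) * Kd α t j j := by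
    rw [hprod, hPd]; exact hterm
  exact le_of_mul_le_mul_right this hKjjpos
end

section
/- For all 1 ≤ i ≤ n ≤ N one has the reproducing identity ∑_{j=i}^{n} P^{n,j} K^{j,i} = 1. -/
open Real Finset

lemma Kd_diag_pos (α : ℝ) (hα0 : 0 < α) (hα1 : α < 1) (t : ℕ → ℝ) (i : ℕ)
    (h : t (i - 1) < t i) : 0 < Kd α t i i := by
  have hΔ : 0 < t i - t (i - 1) := by linarith
  have hk0 : kk (2 - α) (t i - t i) = 0 := by
    simp [kk, Real.zero_rpow (by norm_num; linarith : (2:ℝ) - α - 1 ≠ 0)]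
  have hk : 0 < kk (2 - α) (t i - t (i - 1)) :=
    div_pos (Real.rpow_pos_of_pos hΔ _) (Real.Gamma_pos_of_pos (by linarith))
  unfold Kd
  rw [hk0]
  exact div_pos (by linarith) hΔ

/-- reproducing identity for the complementary kernels:
`∑_{j=i}^n P^{n,j} K^{j,i} = 1`. -/
theorem stmt3 (α : ℝ) (hα0 : 0 < α) (hα1 : α < 1) (N : ℕ) (hN : 1 ≤ N)
    (t : ℕ → ℝ) (ht0 : t 0 = 0)
    (hmono : ∀ i, 1 ≤ i → i ≤ N → t (i - 1) < t i) :
    ∀ n i, 1 ≤ i → i ≤ n → n ≤ N →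
      ∑ j ∈ Finset.Icc i n, Pd α t n j * Kd α t j i = 1 := by
  suffices h : ∀ m n i, 1 ≤ i → i ≤ n → n ≤ N → n - i = m →
      ∑ j ∈ Finset.Icc i n, Pd α t n j * Kd α t j i = 1 by
    intro n i h1 h2 h3
    exact h (n - i) n i h1 h2 h3 rfl
  intro m
  induction m with
  | zero =>
    intro n i h1 h2 h3 hm
    have hin : i = n := by omega
    subst hin
    have hK := Kd_diag_pos α hα0 hα1 t i (hmono i h1 (le_trans h2 h3))
    rw [Finset.Icc_self, Finset.sum_singleton]
    unfold Pd
    rw [Nat.sub_self, Paux]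
    field_simp
  | succ m ih =>
    intro n i h1 h2 h3 hm
    have hin : i < n := by omega
    have hK := Kd_diag_pos α hα0 hα1 t i (hmono i h1 (by omega))
    -- split off the j = i term
    have hsplit : Finset.Icc i n = insert i (Finset.Icc (i + 1) n) := by
      ext x; simp only [Finset.mem_Icc, Finset.mem_insert]; omega
    rw [hsplit, Finset.sum_insert (by simp)]
    -- unfold Pd at i
    have hPi : Pd α t n i * Kd α t i i
        = ∑ j ∈ Finset.Icc (i + 1) n, Pd α t n j * (Kd α t j (i + 1) - Kd α t j i) := by
      have hni : n - i = m + 1 := hm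
      have hni1 : n - (m + 1) = i := by omega
      have hnm : n - m = i + 1 := by omega
      unfold Pd
      rw [hni, Paux, Finset.sum_attach _ (fun r =>
        Paux α t n r * (Kd α t (n - r) (n - m) - Kd α t (n - r) (n - (m + 1))))]
      rw [hni1, hnm]
      rw [one_div, mul_comm, ← mul_assoc, mul_inv_cancel₀ (ne_of_gt hK), one_mul]
      refine Finset.sum_nbij' (fun r => n - r) (fun j => n - j) ?_ ?_ ?_ ?_ ?_
      · intro a ha; simp only [Finset.mem_range] at ha; simp only [Finset.mem_Icc]; omega
      · intro a ha; simp only [Finset.mem_Icc] at ha; simp only [Finset.mem_range]; omega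
      · intro a ha; simp only [Finset.mem_range] at ha; omega
      · intro a ha; simp only [Finset.mem_Icc] at ha; omega
      · intro a ha; simp only [Finset.mem_range] at ha
        have h2 : n - (n - a) = a := by omega
        simp only [Pd, h2]
    rw [hPi, ← Finset.sum_add_distrib]
    have : ∀ j ∈ Finset.Icc (i + 1) n,
        Pd α t n j * (Kd α t j (i + 1) - Kd α t j i) + Pd α t n j * Kd α t j i
        = Pd α t n j * Kd α t j (i + 1) := by
      intro j _; ring
    rw [Finset.sum_congr rfl this]
    exact ih n (i + 1) (by omega) (by omega) h3 (by omega)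
end

section
/- For every 1 ≤ n ≤ N one has ∑_{j=1}^{n} P^{n,j} ≤ t_n^α / Γ(1+α) ≤ 2 t_n^α. -/
open Real Finset

section helper
open intervalIntegral MeasureTheory

section analytic
variable {α : ℝ}

/-- real Beta integral on [0,1] -/
lemma beta01 (hα0 : 0 < α) (hα1 : α < 1) :
    ∫ x in (0:ℝ)..1, (1 - x) ^ (-α) * x ^ (α - 1) = Real.Gamma (1 - α) * Real.Gamma α := by
  have hs : (0:ℝ) < (α:ℂ).re := by simpa using hα0
  have ht : (0:ℝ) < ((1 - α : ℝ):ℂ).re := by simpa using sub_pos.2 hα1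
  have h := Complex.Gamma_mul_Gamma_eq_betaIntegral hs ht
  have hsum : (α:ℂ) + ((1-α:ℝ):ℂ) = 1 := by push_cast; ring
  rw [hsum, Complex.Gamma_one, one_mul] at h
  have hbeta : Complex.betaIntegral (α:ℂ) ((1-α:ℝ):ℂ)
      = ((∫ x in (0:ℝ)..1, (1 - x) ^ (-α) * x ^ (α - 1) : ℝ) : ℂ) := by
    rw [Complex.betaIntegral, ← intervalIntegral.integral_ofReal]
    apply intervalIntegral.integral_congr
    intro x hx
    rw [Set.uIcc_of_le (by norm_num : (0:ℝ) ≤ 1)] at hx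
    have hx0 : (0:ℝ) ≤ x := hx.1
    have hx1 : (0:ℝ) ≤ 1 - x := by linarith [hx.2]
    simp only [Complex.ofReal_mul]
    rw [Complex.ofReal_cpow hx1, Complex.ofReal_cpow hx0]
    push_cast
    rw [show (1 - (α:ℂ) - 1) = -(α:ℂ) by ring, mul_comm]
  rw [hbeta] at h
  have := congrArg Complex.re h
  simp only [Complex.Gamma_ofReal] at h
  rw [← Complex.ofReal_mul] at h
  have := Complex.ofReal_injective h.symm
  rw [this, mul_comm]

end analytic

section analytic2
variable {α : ℝ}

lemma intF (hα0 : 0 < α) (hα1 : α < 1) (T a b : ℝ) :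
    ∫ u in a..b, (T - u) ^ (-α) = ((T - a) ^ (1 - α) - (T - b) ^ (1 - α)) / (1 - α) := by
  rw [intervalIntegral.integral_comp_sub_left (fun x => x ^ (-α)) T]
  rw [integral_rpow (Or.inl (by linarith : (-1:ℝ) < -α))]
  rw [show -α + 1 = 1 - α by ring]

lemma intG (hα0 : 0 < α) (hα1 : α < 1) (a b : ℝ) :
    ∫ u in a..b, u ^ (α - 1) = (b ^ α - a ^ α) / α := by
  rw [integral_rpow (Or.inl (by linarith : (-1:ℝ) < α - 1))]
  rw [show α - 1 + 1 = α by ring]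

lemma intgF (hα0 : 0 < α) (hα1 : α < 1) (T a b : ℝ) :
    IntervalIntegrable (fun u => (T - u) ^ (-α)) volume a b := by
  have h := (intervalIntegrable_rpow' (r := -α) (by linarith)
      (a := T - a) (b := T - b)).comp_sub_left T
  simpa using h

lemma intgG (hα0 : 0 < α) (hα1 : α < 1) (a b : ℝ) :
    IntervalIntegrable (fun u => u ^ (α - 1)) volume a b :=
  intervalIntegrable_rpow' (by linarith)

lemma betaT (hα0 : 0 < α) (hα1 : α < 1) {T : ℝ} (hT : 0 < T) :
    ∫ u in (0:ℝ)..T, (T - u) ^ (-α) * u ^ (α - 1) = Real.Gamma (1 - α) * Real.Gamma α := by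
  have hT' : (T:ℝ) ≠ 0 := ne_of_gt hT
  have h := intervalIntegral.integral_comp_mul_left
    (fun u => (T - u) ^ (-α) * u ^ (α - 1)) (a := (0:ℝ)) (b := 1) hT'
  rw [mul_zero, mul_one] at h
  have h2 : ∫ x in (0:ℝ)..1, (T - T * x) ^ (-α) * (T * x) ^ (α - 1)
      = T ^ (-α) * T ^ (α - 1) * ∫ x in (0:ℝ)..1, (1 - x) ^ (-α) * x ^ (α - 1) := by
    rw [← intervalIntegral.integral_const_mul]
    apply intervalIntegral.integral_congr
    intro x hx
    rw [Set.uIcc_of_le (by norm_num : (0:ℝ) ≤ 1)] at hx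
    have hx0 : (0:ℝ) ≤ x := hx.1
    have hx1 : (0:ℝ) ≤ 1 - x := by linarith [hx.2]
    dsimp only
    have e1 : T - T * x = T * (1 - x) := by ring
    rw [e1, Real.mul_rpow hT.le hx1, Real.mul_rpow hT.le hx0]
    ring
  rw [h2, beta01 hα0 hα1] at h
  have e3 : T ^ (-α) * T ^ (α - 1) = T⁻¹ := by
    rw [← Real.rpow_add hT, show -α + (α - 1) = -1 by ring, Real.rpow_neg_one]
  rw [e3] at h
  have := congrArg (fun z => T * z) h
  simp only [smul_eq_mul] at this
  rw [← mul_assoc, mul_inv_cancel₀ hT', one_mul, ← mul_assoc, mul_inv_cancel₀ hT', one_mul] at this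
  exact this.symm

lemma intgFG (hα0 : 0 < α) (hα1 : α < 1) {T a b : ℝ} (ha : 0 ≤ a) (hab : a < b) (hbT : b ≤ T) :
    IntervalIntegrable (fun u => (T - u) ^ (-α) * u ^ (α - 1)) volume a b := by
  set m := (a + b) / 2 with hm
  have ham : a < m := by simp only [hm]; linarith
  have hmb : m < b := by simp only [hm]; linarith
  have h1 : IntervalIntegrable (fun u => (T - u) ^ (-α) * u ^ (α - 1)) volume a m := by
    have hcont : ContinuousOn (fun u => (T - u) ^ (-α)) (Set.uIcc a m) := by
      rw [Set.uIcc_of_le ham.le]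
      intro u hu
      have : T - u ≠ 0 := by
        have := hu.2; simp only [Set.mem_Icc] at hu
        have : u < T := lt_of_le_of_lt hu.2 (lt_of_lt_of_le hmb hbT)
        linarith
      exact ((Real.continuousAt_rpow_const _ _ (Or.inl this)).comp
        ((continuous_const.sub continuous_id).continuousAt)).continuousWithinAt
    exact (intgG hα0 hα1 a m).continuousOn_mul hcont
  have h2 : IntervalIntegrable (fun u => (T - u) ^ (-α) * u ^ (α - 1)) volume m b := by
    have hcont : ContinuousOn (fun u => u ^ (α - 1)) (Set.uIcc m b) := by
      rw [Set.uIcc_of_le hmb.le]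
      intro u hu
      simp only [Set.mem_Icc] at hu
      have : u ≠ 0 := by have : 0 < m := lt_of_le_of_lt ha ham; nlinarith [hu.1]
      exact (Real.continuousAt_rpow_const _ _ (Or.inl this)).continuousWithinAt
    exact (intgF hα0 hα1 T m b).mul_continuousOn hcont
  exact h1.trans h2
end analytic2

section cheb
variable {α : ℝ}

lemma cheb (hα0 : 0 < α) (hα1 : α < 1) {T a b : ℝ} (ha : 0 ≤ a) (hab : a < b) (hbT : b ≤ T) :
    (∫ u in a..b, (T - u) ^ (-α) * u ^ (α - 1))
      ≤ ((b ^ α - a ^ α) / α) / (b - a) * ∫ u in a..b, (T - u) ^ (-α) := by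
  set s : ℝ := ((b ^ α - a ^ α) / α) / (b - a) with hs
  have hba : b - a ≠ 0 := sub_ne_zero.2 hab.ne'
  have hαne : α ≠ 0 := ne_of_gt hα0
  have hcont : ContinuousOn (fun x : ℝ => x ^ α) (Set.Icc a b) := by
    intro x hx
    exact (Real.continuousAt_rpow_const _ _ (Or.inr hα0.le)).continuousWithinAt
  have hderiv : ∀ x ∈ Set.Ioo a b, HasDerivAt (fun x : ℝ => x ^ α) (α * x ^ (α - 1)) x := by
    intro x hx
    exact Real.hasDerivAt_rpow_const (Or.inl (ne_of_gt (lt_of_le_of_lt ha hx.1)))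
  obtain ⟨c, hc, hceq⟩ := exists_hasDerivAt_eq_slope (fun x : ℝ => x ^ α)
    (fun x => α * x ^ (α - 1)) hab hcont hderiv
  have hc0 : 0 < c := lt_of_le_of_lt ha hc.1
  have hcb : c < b := hc.2
  have hsc : c ^ (α - 1) = s := by
    have : s = c ^ (α - 1) := by
      rw [hs, div_div, mul_comm α (b - a), ← div_div, ← hceq, mul_div_cancel_left₀ _ hαne]
    exact this.symm
  have hTc : 0 < T - c := by linarith
  have hpt : ∀ u : ℝ, a < u → u < b →
      0 ≤ ((T - u) ^ (-α) - (T - c) ^ (-α)) * (s - u ^ (α - 1)) := by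
    intro u hau hub
    have hu0 : 0 < u := lt_of_le_of_lt ha hau
    have hTu : 0 < T - u := by linarith
    rcases le_total u c with h | h
    · have h1 : (T - u) ^ (-α) ≤ (T - c) ^ (-α) :=
        Real.rpow_le_rpow_of_nonpos hTc (by linarith) (by linarith)
      have h2 : c ^ (α - 1) ≤ u ^ (α - 1) :=
        Real.rpow_le_rpow_of_nonpos hu0 h (by linarith)
      rw [hsc] at h2
      nlinarith
    · have h1 : (T - c) ^ (-α) ≤ (T - u) ^ (-α) :=
        Real.rpow_le_rpow_of_nonpos hTu (by linarith) (by linarith)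
      have h2 : u ^ (α - 1) ≤ c ^ (α - 1) :=
        Real.rpow_le_rpow_of_nonpos hc0 h (by linarith)
      rw [hsc] at h2
      nlinarith
  have hFint := intgF hα0 hα1 T a b
  have hGint := intgG hα0 hα1 a b
  have hFGint := intgFG hα0 hα1 ha hab hbT
  have key : 0 ≤ ∫ u in a..b,
      ((T - u) ^ (-α) - (T - c) ^ (-α)) * (s - u ^ (α - 1)) := by
    rw [intervalIntegral.integral_of_le hab.le]
    apply MeasureTheory.setIntegral_nonneg_ae measurableSet_Ioc
    have hne : ∀ᵐ u : ℝ, u ≠ b := by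
      refine (MeasureTheory.ae_iff).2 ?_
      simpa using measure_singleton b
    filter_upwards [hne] with u hub hu
    exact hpt u hu.1 (lt_of_le_of_ne hu.2 hub)
  have expand : (fun u : ℝ => ((T - u) ^ (-α) - (T - c) ^ (-α)) * (s - u ^ (α - 1)))
      = fun u : ℝ => (s * (T - u) ^ (-α) - (T - u) ^ (-α) * u ^ (α - 1))
        - ((T - c) ^ (-α) * s - (T - c) ^ (-α) * u ^ (α - 1)) := by
    funext u; ring
  rw [expand] at key
  rw [intervalIntegral.integral_sub
      ((hFint.const_mul s).sub hFGint)
      ((intervalIntegrable_const).sub (hGint.const_mul _))] at key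
  rw [intervalIntegral.integral_sub (hFint.const_mul s) hFGint] at key
  rw [intervalIntegral.integral_sub (intervalIntegrable_const)
      (hGint.const_mul _)] at key
  have e1 : (∫ x in a..b, s * (T - x) ^ (-α)) = s * ∫ x in a..b, (T - x) ^ (-α) :=
    intervalIntegral.integral_const_mul _ _
  have e2 : (∫ _x in a..b, (T - c) ^ (-α) * s) = (T - c) ^ (-α) * s * (b - a) := by
    rw [intervalIntegral.integral_const, smul_eq_mul]; ring
  have e3 : (∫ x in a..b, (T - c) ^ (-α) * x ^ (α - 1))
      = (T - c) ^ (-α) * ((b ^ α - a ^ α) / α) := by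
    rw [intervalIntegral.integral_const_mul, intG hα0 hα1]
  have e4 : (T - c) ^ (-α) * s * (b - a) = (T - c) ^ (-α) * ((b ^ α - a ^ α) / α) := by
    rw [hs]; field_simp
  rw [e1, e2, e3, e4] at key
  linarith
end cheb

section step3
variable {α : ℝ} {N : ℕ} {t : ℕ → ℝ}

lemma tmono (hmono : ∀ i, 1 ≤ i → i ≤ N → t (i - 1) < t i) :
    ∀ q, q ≤ N → ∀ p, p ≤ q → t p ≤ t q := by
  intro q
  induction q with
  | zero => intro _ p hp; simp [Nat.le_zero.1 hp]
  | succ q ih =>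
    intro hq p hp
    rcases Nat.lt_succ_iff_lt_or_eq.1 (Nat.lt_succ_of_le hp) with h | h
    · have h1 : t p ≤ t q := ih (by omega) p (by omega)
      have h2 : t q < t (q + 1) := by
        have := hmono (q + 1) (by omega) hq
        simpa using this
      linarith
    · simp [h]

lemma step3 (hα0 : 0 < α) (hα1 : α < 1) (ht0 : t 0 = 0)
    (hmono : ∀ i, 1 ≤ i → i ≤ N → t (i - 1) < t i)
    {j : ℕ} (hj1 : 1 ≤ j) (hjN : j ≤ N) :
    1 ≤ ∑ i ∈ Finset.Icc 1 j, Kd α t j i * ((t i ^ α - t (i - 1) ^ α) / Real.Gamma (1 + α)) := by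
  set T := t j with hT
  have hΓα : 0 < Real.Gamma α := Real.Gamma_pos_of_pos hα0
  have hΓ1α : 0 < Real.Gamma (1 - α) := Real.Gamma_pos_of_pos (by linarith)
  have htnn : ∀ p, p ≤ N → 0 ≤ t p := by
    intro p hp
    have := tmono hmono p hp 0 (Nat.zero_le p)
    rw [ht0] at this; exact this
  -- per term bound
  have hterm : ∀ i ∈ Finset.Icc 1 j,
      (Real.Gamma (1 - α) * Real.Gamma α)⁻¹
          * (∫ u in (t (i-1))..(t i), (T - u) ^ (-α) * u ^ (α - 1))
        ≤ Kd α t j i * ((t i ^ α - t (i - 1) ^ α) / Real.Gamma (1 + α)) := by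
    intro i hi
    rw [Finset.mem_Icc] at hi
    have hiN : i ≤ N := le_trans hi.2 hjN
    have ha : 0 ≤ t (i - 1) := htnn _ (by omega)
    have hab : t (i - 1) < t i := hmono i hi.1 hiN
    have hbT : t i ≤ T := tmono hmono j hjN i hi.2
    have hba : t i - t (i - 1) ≠ 0 := sub_ne_zero.2 hab.ne'
    have hg2 : Real.Gamma (2 - α) = (1 - α) * Real.Gamma (1 - α) := by
      rw [show (2 - α : ℝ) = (1 - α) + 1 by ring, Real.Gamma_add_one (by linarith)]
    have hg1 : Real.Gamma (1 + α) = α * Real.Gamma α := by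
      rw [show (1 + α : ℝ) = α + 1 by ring, Real.Gamma_add_one (ne_of_gt hα0)]
    have hKd : Kd α t j i
        = (∫ u in (t (i-1))..(t i), (T - u) ^ (-α)) / (Real.Gamma (1 - α) * (t i - t (i - 1))) := by
      rw [Kd, kk, kk, intF hα0 hα1 T (t (i-1)) (t i), hg2,
        show (2 - α - 1 : ℝ) = 1 - α by ring]
      have h1α : (1 - α : ℝ) ≠ 0 := by linarith
      field_simp
      ring
    rw [hKd]
    have hch := cheb hα0 hα1 ha hab hbT
    have hrw : (∫ u in (t (i-1))..(t i), (T - u) ^ (-α))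
          / (Real.Gamma (1 - α) * (t i - t (i - 1))) * ((t i ^ α - t (i - 1) ^ α) / Real.Gamma (1 + α))
        = (Real.Gamma (1 - α) * Real.Gamma α)⁻¹
          * (((t i ^ α - t (i - 1) ^ α) / α) / (t i - t (i - 1))
              * ∫ u in (t (i-1))..(t i), (T - u) ^ (-α)) := by
      rw [hg1]
      field_simp
    rw [hrw]
    exact mul_le_mul_of_nonneg_left hch (by positivity)
  have hsum := Finset.sum_le_sum hterm
  refine le_trans ?_ hsum
  -- sum of the integrals equals the Beta integral
  have hint : ∀ k, k < j → IntervalIntegrable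
      (fun u => (T - u) ^ (-α) * u ^ (α - 1)) volume (t k) (t (k + 1)) := by
    intro k hk
    have h1 : t k < t (k + 1) := by
      have := hmono (k + 1) (by omega) (by omega)
      simpa using this
    exact intgFG hα0 hα1 (htnn k (by omega)) h1
      (tmono hmono j hjN (k + 1) (by omega))
  have hadj := intervalIntegral.sum_integral_adjacent_intervals
    (a := t) (n := j) (f := fun u => (T - u) ^ (-α) * u ^ (α - 1)) hint
  have hTpos : 0 < T := by
    have h1 : t 0 ≤ t (j - 1) := tmono hmono (j - 1) (by omega) 0 (Nat.zero_le _)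
    have h2 : t (j - 1) < t j := hmono j hj1 hjN
    rw [ht0] at h1; rw [hT]; linarith
  rw [ht0] at hadj
  have hreidx : ∑ i ∈ Finset.Icc 1 j, (Real.Gamma (1 - α) * Real.Gamma α)⁻¹
        * (∫ u in (t (i-1))..(t i), (T - u) ^ (-α) * u ^ (α - 1))
      = ∑ k ∈ Finset.range j, (Real.Gamma (1 - α) * Real.Gamma α)⁻¹
        * (∫ u in (t k)..(t (k + 1)), (T - u) ^ (-α) * u ^ (α - 1)) := by
    refine Finset.sum_bij' (fun i _ => i - 1) (fun k _ => k + 1) ?_ ?_ ?_ ?_ ?_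
    · intro i hi; rw [Finset.mem_Icc] at hi; rw [Finset.mem_range]; omega
    · intro k hk; rw [Finset.mem_range] at hk; rw [Finset.mem_Icc]; omega
    · intro i hi; rw [Finset.mem_Icc] at hi; omega
    · intro k hk; simp
    · intro i hi
      rw [Finset.mem_Icc] at hi
      rw [show i - 1 + 1 = i from by omega]
  rw [hreidx, ← Finset.mul_sum, hadj, betaT hα0 hα1 hTpos]
  rw [inv_mul_cancel₀ (by positivity)]
end step3

section discrete
variable {α : ℝ} {N : ℕ} {t : ℕ → ℝ}

lemma Kd_eq (i j : ℕ) :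
    Kd α t j i = ((t j - t (i - 1)) ^ (1 - α) - (t j - t i) ^ (1 - α))
      / Real.Gamma (2 - α) / (t i - t (i - 1)) := by
  rw [Kd, kk, kk, show (2 - α - 1 : ℝ) = 1 - α by ring, div_sub_div_same]

lemma Kpos (hα0 : 0 < α) (hα1 : α < 1) (ht0 : t 0 = 0)
    (hmono : ∀ i, 1 ≤ i → i ≤ N → t (i - 1) < t i)
    {i j : ℕ} (hi1 : 1 ≤ i) (hij : i ≤ j) (hjN : j ≤ N) : 0 < Kd α t j i := by
  have hab : t (i - 1) < t i := hmono i hi1 (le_trans hij hjN)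
  have hbT : t i ≤ t j := tmono hmono j hjN i hij
  have hx2 : 0 ≤ t j - t i := by linarith
  have hx12 : t j - t i < t j - t (i - 1) := by linarith
  have hΓ : 0 < Real.Gamma (2 - α) := Real.Gamma_pos_of_pos (by linarith)
  rw [Kd_eq]
  have hnum : (t j - t i) ^ (1 - α) < (t j - t (i - 1)) ^ (1 - α) :=
    Real.rpow_lt_rpow hx2 hx12 (by linarith)
  apply div_pos (div_pos (by linarith) hΓ) (by linarith)

lemma Kmono (hα0 : 0 < α) (hα1 : α < 1) (ht0 : t 0 = 0)
    (hmono : ∀ i, 1 ≤ i → i ≤ N → t (i - 1) < t i)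
    {i j : ℕ} (hi1 : 1 ≤ i) (hij : i + 1 ≤ j) (hjN : j ≤ N) :
    Kd α t j i ≤ Kd α t j (i + 1) := by
  have hΓ : 0 < Real.Gamma (2 - α) := Real.Gamma_pos_of_pos (by linarith)
  set x := t j - t (i + 1) with hx
  set y := t j - t i with hy
  set z := t j - t (i - 1) with hz
  have h1 : t (i - 1) < t i := hmono i hi1 (by omega)
  have h2 : t i < t (i + 1) := by
    have := hmono (i + 1) (by omega) (by omega)
    simpa using this
  have h3 : t (i + 1) ≤ t j := tmono hmono j hjN (i + 1) hij
  have hx0 : 0 ≤ x := by rw [hx]; linarith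
  have hxy : x < y := by rw [hx, hy]; linarith
  have hyz : y < z := by rw [hy, hz]; linarith
  have hconc : ConcaveOn ℝ (Set.Ici 0) (fun u : ℝ => u ^ (1 - α)) :=
    Real.concaveOn_rpow (by linarith) (by linarith)
  have hslope := hconc.slope_anti_adjacent (Set.mem_Ici.2 hx0)
    (Set.mem_Ici.2 (by linarith : (0:ℝ) ≤ z)) hxy hyz
  rw [Kd_eq, Kd_eq]
  have e1 : t (i + 1 - 1) = t i := by norm_num
  rw [e1]
  have ed1 : t i - t (i - 1) = z - y := by rw [hy, hz]; ring
  have ed2 : t (i + 1) - t i = y - x := by rw [hx, hy]; ring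
  have eb1 : t j - t (i - 1) = z := by rw [hz]
  have eb2 : t j - t i = y := by rw [hy]
  have eb3 : t j - t (i + 1) = x := by rw [hx]
  rw [ed1, ed2, eb1, eb2, eb3]
  rw [div_right_comm, div_right_comm (_ - x ^ (1 - α))]
  gcongr
end discrete

section discrete2
variable {α : ℝ} {N : ℕ} {t : ℕ → ℝ}

lemma Qid (hα0 : 0 < α) (hα1 : α < 1) (ht0 : t 0 = 0)
    (hmono : ∀ i, 1 ≤ i → i ≤ N → t (i - 1) < t i)
    {n : ℕ} (hn1 : 1 ≤ n) (hnN : n ≤ N) :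
    ∀ m, m < n → ∑ r ∈ Finset.range (m + 1),
      Paux α t n r * Kd α t (n - r) (n - m) = 1 := by
  intro m
  induction m with
  | zero =>
    intro _
    have hK : 0 < Kd α t n n := Kpos hα0 hα1 ht0 hmono hn1 le_rfl hnN
    simp [Paux, one_div, inv_mul_cancel₀ (ne_of_gt hK)]
  | succ m ih =>
    intro hmn
    have hK : 0 < Kd α t (n - (m + 1)) (n - (m + 1)) :=
      Kpos hα0 hα1 ht0 hmono (by omega) le_rfl (by omega)
    rw [Finset.sum_range_succ]
    have hunf : Paux α t n (m + 1) * Kd α t (n - (m + 1)) (n - (m + 1))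
        = ∑ r ∈ Finset.range (m + 1), Paux α t n r
            * (Kd α t (n - r) (n - m) - Kd α t (n - r) (n - (m + 1))) := by
      rw [Paux, Finset.sum_attach (Finset.range (m + 1))
        (fun r => Paux α t n r * (Kd α t (n - r) (n - m) - Kd α t (n - r) (n - (m + 1))))]
      rw [one_div, mul_comm, ← mul_assoc, mul_inv_cancel₀ (ne_of_gt hK), one_mul]
    rw [hunf, ← Finset.sum_add_distrib]
    have : ∀ r ∈ Finset.range (m + 1),
        Paux α t n r * Kd α t (n - r) (n - (m + 1))
          + Paux α t n r * (Kd α t (n - r) (n - m) - Kd α t (n - r) (n - (m + 1)))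
        = Paux α t n r * Kd α t (n - r) (n - m) := by
      intro r _; ring
    rw [Finset.sum_congr rfl this]
    exact ih (by omega)

lemma Pnonneg (hα0 : 0 < α) (hα1 : α < 1) (ht0 : t 0 = 0)
    (hmono : ∀ i, 1 ≤ i → i ≤ N → t (i - 1) < t i)
    {n : ℕ} (hn1 : 1 ≤ n) (hnN : n ≤ N) :
    ∀ m, m < n → 0 ≤ Paux α t n m := by
  intro m
  induction m using Nat.strong_induction_on with
  | _ m ih =>
    intro hmn
    match m with
    | 0 =>
      have hK : 0 < Kd α t n n := Kpos hα0 hα1 ht0 hmono hn1 le_rfl hnN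
      rw [Paux]
      positivity
    | m + 1 =>
      have hK : 0 < Kd α t (n - (m + 1)) (n - (m + 1)) :=
        Kpos hα0 hα1 ht0 hmono (by omega) le_rfl (by omega)
      rw [Paux]
      apply mul_nonneg (by positivity)
      apply Finset.sum_nonneg
      intro r _
      have hr : r.1 < m + 1 := Finset.mem_range.mp r.2
      apply mul_nonneg (ih r.1 hr (by omega))
      have hK2 : Kd α t (n - r.1) (n - (m + 1)) ≤ Kd α t (n - r.1) (n - (m + 1) + 1) := by
        apply Kmono hα0 hα1 ht0 hmono (by omega) (by omega) (by omega)
      rw [show n - (m + 1) + 1 = n - m from by omega] at hK2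
      linarith

lemma PKid (hα0 : 0 < α) (hα1 : α < 1) (ht0 : t 0 = 0)
    (hmono : ∀ i, 1 ≤ i → i ≤ N → t (i - 1) < t i)
    {n : ℕ} (hn1 : 1 ≤ n) (hnN : n ≤ N) {i : ℕ} (hi1 : 1 ≤ i) (hin : i ≤ n) :
    ∑ j ∈ Finset.Icc i n, Pd α t n j * Kd α t j i = 1 := by
  have h := Qid hα0 hα1 ht0 hmono hn1 hnN (n - i) (by omega)
  rw [← h]
  refine Finset.sum_bij' (fun j _ => n - j) (fun r _ => n - r) ?_ ?_ ?_ ?_ ?_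
  · intro j hj; rw [Finset.mem_Icc] at hj; rw [Finset.mem_range]; omega
  · intro r hr; rw [Finset.mem_range] at hr; rw [Finset.mem_Icc]; omega
  · intro j hj; rw [Finset.mem_Icc] at hj; omega
  · intro r hr; rw [Finset.mem_range] at hr; omega
  · intro j hj
    rw [Finset.mem_Icc] at hj
    rw [Pd, show n - (n - j) = j from by omega, show n - (n - i) = i from by omega]
end discrete2
end helper

/-- `∑_{j=1}^n P^{n,j} ≤ t_n^α/Γ(1+α) ≤ 2 t_n^α`. -/
theorem stmt6 (α : ℝ) (hα0 : 0 < α) (hα1 : α < 1) (N : ℕ) (hN : 1 ≤ N)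
    (t : ℕ → ℝ) (ht0 : t 0 = 0)
    (hmono : ∀ i, 1 ≤ i → i ≤ N → t (i - 1) < t i) :
    ∀ n, 1 ≤ n → n ≤ N →
      (∑ j ∈ Finset.Icc 1 n, Pd α t n j ≤ t n ^ α / Real.Gamma (1 + α)) ∧
      t n ^ α / Real.Gamma (1 + α) ≤ 2 * t n ^ α := by
  intro n hn1 hnN
  have hΓ : 0 < Real.Gamma (1 + α) := Real.Gamma_pos_of_pos (by linarith)
  have htn : 0 ≤ t n := by
    have := tmono (N := N) hmono n hnN 0 (Nat.zero_le n); rw [ht0] at this; exact this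
  have hΓhalf : (1:ℝ)/2 ≤ Real.Gamma (1 + α) := by
    have hlt : Real.Gamma 2 < Real.Gamma (2 + α) :=
      Real.Gamma_strictMonoOn_Ici (Set.mem_Ici.2 le_rfl)
        (Set.mem_Ici.2 (by linarith)) (by linarith)
    rw [Real.Gamma_two] at hlt
    rw [show (2 + α : ℝ) = (1 + α) + 1 by ring,
      Real.Gamma_add_one (by linarith : (1 + α : ℝ) ≠ 0)] at hlt
    nlinarith
  constructor
  · -- main inequality
    have hPnn : ∀ j ∈ Finset.Icc 1 n, 0 ≤ Pd α t n j := by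
      intro j hj
      rw [Finset.mem_Icc] at hj
      rw [Pd]
      exact Pnonneg hα0 hα1 ht0 hmono hn1 hnN (n - j) (by omega)
    have hstepA : ∑ j ∈ Finset.Icc 1 n, Pd α t n j
        ≤ ∑ j ∈ Finset.Icc 1 n, Pd α t n j
          * ∑ i ∈ Finset.Icc 1 j, Kd α t j i
              * ((t i ^ α - t (i - 1) ^ α) / Real.Gamma (1 + α)) := by
      apply Finset.sum_le_sum
      intro j hj
      rw [Finset.mem_Icc] at hj
      exact le_mul_of_one_le_right (hPnn j (Finset.mem_Icc.2 hj))
        (step3 hα0 hα1 ht0 hmono hj.1 (le_trans hj.2 hnN))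
    have hswap : ∑ j ∈ Finset.Icc 1 n, Pd α t n j
          * ∑ i ∈ Finset.Icc 1 j, Kd α t j i
              * ((t i ^ α - t (i - 1) ^ α) / Real.Gamma (1 + α))
        = ∑ i ∈ Finset.Icc 1 n, (t i ^ α - t (i - 1) ^ α) / Real.Gamma (1 + α) := by
      have e1 : ∀ j ∈ Finset.Icc 1 n, Pd α t n j
            * ∑ i ∈ Finset.Icc 1 j, Kd α t j i
                * ((t i ^ α - t (i - 1) ^ α) / Real.Gamma (1 + α))
          = ∑ i ∈ Finset.Icc 1 j, Pd α t n j * Kd α t j i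
                * ((t i ^ α - t (i - 1) ^ α) / Real.Gamma (1 + α)) := by
        intro j _
        rw [Finset.mul_sum]
        exact Finset.sum_congr rfl fun i _ => by ring
      rw [Finset.sum_congr rfl e1]
      rw [Finset.sum_comm' (s := Finset.Icc 1 n) (t := fun j => Finset.Icc 1 j)
        (t' := Finset.Icc 1 n) (s' := fun i => Finset.Icc i n)
        (by intro j i; simp only [Finset.mem_Icc]; omega)]
      apply Finset.sum_congr rfl
      intro i hi
      rw [Finset.mem_Icc] at hi
      rw [← Finset.sum_mul,
        PKid hα0 hα1 ht0 hmono hn1 hnN hi.1 hi.2, one_mul]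
    have htel : ∑ i ∈ Finset.Icc 1 n, (t i ^ α - t (i - 1) ^ α) / Real.Gamma (1 + α)
        = t n ^ α / Real.Gamma (1 + α) := by
      have e2 : ∑ i ∈ Finset.Icc 1 n, (t i ^ α - t (i - 1) ^ α) / Real.Gamma (1 + α)
          = ∑ k ∈ Finset.range n,
              (t (k + 1) ^ α / Real.Gamma (1 + α) - t k ^ α / Real.Gamma (1 + α)) := by
        refine Finset.sum_bij' (fun i _ => i - 1) (fun k _ => k + 1) ?_ ?_ ?_ ?_ ?_
        · intro i hi; rw [Finset.mem_Icc] at hi; rw [Finset.mem_range]; omega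
        · intro k hk; rw [Finset.mem_range] at hk; rw [Finset.mem_Icc]; omega
        · intro i hi; rw [Finset.mem_Icc] at hi; omega
        · intro k hk; simp
        · intro i hi
          rw [Finset.mem_Icc] at hi
          rw [show i - 1 + 1 = i from by omega, sub_div]
      rw [e2, Finset.sum_range_sub (fun k => t k ^ α / Real.Gamma (1 + α)),
        ht0, Real.zero_rpow (ne_of_gt hα0), zero_div, sub_zero]
    rw [hswap, htel] at hstepA
    exact hstepA
  · -- trivial bound
    have hpow : 0 ≤ t n ^ α := Real.rpow_nonneg htn α
    rw [div_le_iff₀ hΓ]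
    nlinarith
end

section
/- Let H be a real inner product space and φ^0, φ^1, …, φ^n ∈ H (1 ≤ n ≤ N). Then ⟨D^α_{t_n} φ^n, φ^n⟩ ≥ (1/2) ∑_{j=1}^{n} K^{n,j} (‖φ^j‖² − ‖φ^{j−1}‖²) = (1/2) D^α_{t_n} ‖φ^n‖², where ‖·‖ is the norm induced by the inner product. -/
open Real Finset

open scoped RealInnerProductSpace

lemma abel_sum' (K d : ℕ → ℝ) : ∀ n : ℕ,
    ∑ j ∈ Finset.Icc 1 (n+1), K j * (d (j-1) - d j)
      = K 1 * d 0 - K (n+1) * d (n+1) + ∑ j ∈ Finset.Icc 1 n, (K (j+1) - K j) * d j := by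
  intro n
  induction n with
  | zero => simp; ring
  | succ m ih =>
    rw [Finset.sum_Icc_succ_top (by omega : 1 ≤ m+1+1), ih,
      Finset.sum_Icc_succ_top (by omega : 1 ≤ m+1)]
    simp only [Nat.add_sub_cancel]
    ring

lemma inner_key {H : Type*} [NormedAddCommGroup H] [InnerProductSpace ℝ H] (x y z : H) :
    ⟪x - y, z⟫ = (1/2) * (‖x‖^2 - ‖y‖^2) + (1/2) * (‖y - z‖^2 - ‖x - z‖^2) := by
  rw [@norm_sub_sq_real H _ _ y z, @norm_sub_sq_real H _ _ x z, inner_sub_left]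
  ring

/-- `⟨D^α φ^n, φ^n⟩ ≥ (1/2) ∑ K^{n,j}(‖φ^j‖² - ‖φ^{j-1}‖²) = (1/2) D^α ‖φ^n‖²`. -/
theorem stmt8 {H : Type*} [NormedAddCommGroup H] [InnerProductSpace ℝ H]
    (α : ℝ) (hα0 : 0 < α) (hα1 : α < 1) (N : ℕ) (hN : 1 ≤ N)
    (t : ℕ → ℝ) (ht0 : t 0 = 0)
    (hmono : ∀ i, 1 ≤ i → i ≤ N → t (i - 1) < t i)
    (φ : ℕ → H) (n : ℕ) (hn1 : 1 ≤ n) (hnN : n ≤ N) :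
    ⟪Dd α t φ n, φ n⟫ ≥
      (1 / 2) * ∑ j ∈ Finset.Icc 1 n, Kd α t n j * (‖φ j‖ ^ 2 - ‖φ (j - 1)‖ ^ 2) ∧
    (1 / 2) * ∑ j ∈ Finset.Icc 1 n, Kd α t n j * (‖φ j‖ ^ 2 - ‖φ (j - 1)‖ ^ 2)
      = (1 / 2) * Dd α t (fun j => ‖φ j‖ ^ 2) n := by
  constructor
  · -- preliminaries
    have hc : 0 < Real.Gamma (2 - α) := Real.Gamma_pos_of_pos (by linarith)
    set g : ℝ → ℝ := fun x => x ^ (1 - α) / Real.Gamma (2 - α) with hg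
    have hkk : ∀ x : ℝ, kk (2 - α) x = g x := by
      intro x; simp only [kk, hg]
      rw [show (2:ℝ) - α - 1 = 1 - α by ring]
    -- monotonicity of t on [0, N]
    have hle : ∀ j, j ≤ N → ∀ i, i ≤ j → t i ≤ t j := by
      intro j
      induction j with
      | zero =>
        intro _ i hi
        have : i = 0 := Nat.le_zero.mp hi
        simp [this]
      | succ m ih =>
        intro hjN i hij
        rcases Nat.lt_or_ge i (m+1) with h | h
        · have h1 : t i ≤ t m := ih (by omega) i (by omega)
          have h2 : t m < t (m+1) := by
            have := hmono (m+1) (by omega) hjN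
            simpa using this
          linarith
        · have : i = m + 1 := by omega
          simp [this]
    -- t n - t j ≥ 0 for j ≤ n
    have htn : ∀ j, j ≤ n → 0 ≤ t n - t j := by
      intro j hj
      have := hle n hnN j hj
      linarith
    have hstep : ∀ j, 1 ≤ j → j ≤ n → 0 < t j - t (j-1) := by
      intro j h1 h2
      have := hmono j h1 (le_trans h2 hnN)
      linarith
    -- g monotone on nonneg
    have hgmono : ∀ x y : ℝ, 0 ≤ x → x ≤ y → g x ≤ g y := by
      intro x y hx hxy
      have : x ^ (1-α) ≤ y ^ (1-α) := Real.rpow_le_rpow hx hxy (by linarith)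
      exact div_le_div_of_nonneg_right this hc.le
    -- g concave on Ici 0
    have hgcon : ConcaveOn ℝ (Set.Ici 0) g := by
      have h1 : ConcaveOn ℝ (Set.Ici 0) (fun x : ℝ => x ^ (1-α)) :=
        Real.concaveOn_rpow (by linarith) (by linarith)
      have h2 := h1.smul (c := (Real.Gamma (2-α))⁻¹) (by positivity)
      have hgeq : g = fun x : ℝ => (Real.Gamma (2-α))⁻¹ • x ^ (1-α) := by
        funext x
        simp [hg, smul_eq_mul, div_eq_inv_mul]
      rw [hgeq]
      exact h2
    -- K nonneg
    have hK0 : ∀ j, 1 ≤ j → j ≤ n → 0 ≤ Kd α t n j := by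
      intro j h1 h2
      have hd := hstep j h1 h2
      have hnum : kk (2-α) (t n - t j) ≤ kk (2-α) (t n - t (j-1)) := by
        rw [hkk, hkk]
        exact hgmono _ _ (htn j h2) (by have := hstep j h1 h2; linarith)
      unfold Kd
      exact div_nonneg (by linarith) hd.le
    -- K monotone in j
    have hKmono : ∀ j, 1 ≤ j → j + 1 ≤ n → Kd α t n j ≤ Kd α t n (j+1) := by
      intro j h1 h2
      set x := t n - t (j+1) with hx
      set y := t n - t j with hy
      set z := t n - t (j-1) with hz
      have hx0 : 0 ≤ x := htn (j+1) h2
      have hxy : x < y := by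
        have := hstep (j+1) (by omega) h2
        simp only [Nat.add_sub_cancel] at this
        simp only [hx, hy]; linarith
      have hyz : y < z := by
        have := hstep j h1 (by omega)
        simp only [hy, hz]; linarith
      have hz0 : z ∈ Set.Ici (0:ℝ) := by
        simp only [Set.mem_Ici]; linarith
      have hslope := hgcon.slope_anti_adjacent (Set.mem_Ici.mpr hx0) hz0 hxy hyz
      have eKj : Kd α t n j = (g z - g y) / (z - y) := by
        unfold Kd; rw [hkk, hkk]
        congr 1
        simp only [hy, hz]; ring
      have eKj1 : Kd α t n (j+1) = (g y - g x) / (y - x) := by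
        unfold Kd; rw [hkk, hkk]
        have e1 : (j+1) - 1 = j := by omega
        rw [e1]
        congr 1
        simp only [hx, hy]; ring
      rw [eKj, eKj1]
      exact hslope
    -- distances
    set d : ℕ → ℝ := fun i => ‖φ i - φ n‖^2 with hd
    have hd0 : ∀ i, 0 ≤ d i := fun i => by positivity
    have hdn : d n = 0 := by simp [hd]
    -- rewrite inner product
    have hinner : ⟪Dd α t φ n, φ n⟫
        = ∑ j ∈ Finset.Icc 1 n, Kd α t n j * ⟪φ j - φ (j-1), φ n⟫ := by
      unfold Dd
      rw [sum_inner]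
      exact Finset.sum_congr rfl fun j _ => real_inner_smul_left _ _ _
    have hsplit : ⟪Dd α t φ n, φ n⟫
        = (1/2) * ∑ j ∈ Finset.Icc 1 n, Kd α t n j * (‖φ j‖^2 - ‖φ (j-1)‖^2)
          + (1/2) * ∑ j ∈ Finset.Icc 1 n, Kd α t n j * (d (j-1) - d j) := by
      rw [hinner, Finset.mul_sum, Finset.mul_sum, ← Finset.sum_add_distrib]
      refine Finset.sum_congr rfl fun j hj => ?_
      rw [inner_key (φ j) (φ (j-1)) (φ n)]
      simp only [hd]
      ring
    -- nonnegativity of the remainder via Abel summation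
    have habel : ∑ j ∈ Finset.Icc 1 n, Kd α t n j * (d (j-1) - d j) ≥ 0 := by
      obtain ⟨m, rfl⟩ : ∃ m, n = m + 1 := ⟨n - 1, by omega⟩
      rw [abel_sum' (Kd α t (m+1)) d m, hdn]
      have h1 : 0 ≤ Kd α t (m+1) 1 * d 0 :=
        mul_nonneg (hK0 1 le_rfl (by omega)) (hd0 0)
      have h2 : 0 ≤ ∑ j ∈ Finset.Icc 1 m, (Kd α t (m+1) (j+1) - Kd α t (m+1) j) * d j := by
        refine Finset.sum_nonneg fun j hj => ?_
        rw [Finset.mem_Icc] at hj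
        exact mul_nonneg (by have := hKmono j hj.1 (by omega); linarith) (hd0 j)
      linarith
    rw [hsplit]
    linarith
  · simp only [Dd, smul_eq_mul]
end

section
/- Let S be a real inner product space, let a : S × S → ℝ be a symmetric positive-semidefinite bilinear form, and let A : S → S be a linear map satisfying ⟨Aψ, v⟩ = a(ψ, v) for all ψ, v ∈ S. Then for all φ^0, φ^1, …, φ^n ∈ S (1 ≤ n ≤ N): ⟨D^α_{t_n} φ^n, A φ^n⟩ ≥ (1/2) ∑_{j=1}^{n} K^{n,j} ( a(φ^j, φ^j) − a(φ^{j−1}, φ^{j−1}) ). -/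
open Real Finset

open scoped RealInnerProductSpace

lemma abel_aux (b W : ℕ → ℝ) (hW : ∀ j, 0 ≤ W j) :
    ∀ n, 1 ≤ n → (∀ j, 1 ≤ j → j + 1 ≤ n → b j ≤ b (j + 1)) → 0 ≤ b 1 →
    0 ≤ (∑ j ∈ Finset.Icc 1 n, b j * (W (j - 1) - W j)) + b n * W n := by
  intro n
  induction n with
  | zero => intro h; omega
  | succ m ih =>
    intro _ hmono hb1
    rcases Nat.eq_or_lt_of_le (Nat.one_le_iff_ne_zero.mpr (Nat.succ_ne_zero m)) with h1 | h1
    · have hm : m = 0 := by omega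
      subst hm
      simp only [Finset.Icc_self, Finset.sum_singleton]
      have := hW 0
      have := hW 1
      nlinarith [hb1]
    · have hm1 : 1 ≤ m := by omega
      have hprev := ih hm1 (fun j hj hj' => hmono j hj (by omega)) hb1
      have hsum : ∑ j ∈ Finset.Icc 1 (m + 1), b j * (W (j - 1) - W j)
          = (∑ j ∈ Finset.Icc 1 m, b j * (W (j - 1) - W j)) + b (m + 1) * (W m - W (m + 1)) := by
        rw [Finset.sum_Icc_succ_top (by omega : 1 ≤ m + 1)]
        simp
      have hbm : b m ≤ b (m + 1) := hmono m hm1 (le_refl _)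
      have := hW m
      have := hW (m + 1)
      rw [hsum]
      nlinarith


/-- for a symmetric positive-semidefinite bilinear form `a` represented by a
linear map `A` (`⟨Aψ, v⟩ = a(ψ,v)`), one has
`⟨D^α φ^n, A φ^n⟩ ≥ (1/2) ∑ K^{n,j}(a(φ^j,φ^j) - a(φ^{j-1},φ^{j-1}))`. -/
theorem stmt9 {S : Type*} [NormedAddCommGroup S] [InnerProductSpace ℝ S]
    (α : ℝ) (hα0 : 0 < α) (hα1 : α < 1) (N : ℕ) (hN : 1 ≤ N)
    (t : ℕ → ℝ) (ht0 : t 0 = 0)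
    (hmono : ∀ i, 1 ≤ i → i ≤ N → t (i - 1) < t i)
    (a : S →ₗ[ℝ] S →ₗ[ℝ] ℝ)
    (hsymm : ∀ x y : S, a x y = a y x)
    (hpsd : ∀ x : S, 0 ≤ a x x)
    (A : S →ₗ[ℝ] S)
    (hA : ∀ ψ v : S, ⟪A ψ, v⟫ = a ψ v)
    (φ : ℕ → S) (n : ℕ) (hn1 : 1 ≤ n) (hnN : n ≤ N) :
    ⟪Dd α t φ n, A (φ n)⟫ ≥
      (1 / 2) * ∑ j ∈ Finset.Icc 1 n,
        Kd α t n j * (a (φ j) (φ j) - a (φ (j - 1)) (φ (j - 1))) := by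
  -- basic facts about the mesh
  have hstep : ∀ i, 1 ≤ i → i ≤ N → t (i - 1) < t i := hmono
  have htlt : ∀ i j : ℕ, i < j → j ≤ N → t i < t j := by
    intro i j hij hjN
    induction j with
    | zero => omega
    | succ m ih =>
      have h1 : t m < t (m + 1) := by
        have := hstep (m + 1) (by omega) hjN
        simpa using this
      rcases Nat.lt_or_ge i m with h | h
      · exact lt_trans (ih h (by omega)) h1
      · have : i = m := by omega
        subst this; exact h1
  have htle : ∀ i j : ℕ, i ≤ j → j ≤ N → t i ≤ t j := by
    intro i j hij hjN
    rcases Nat.eq_or_lt_of_le hij with h | h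
    · subst h; exact le_refl _
    · exact (htlt i j h hjN).le
  have htnonneg : ∀ i : ℕ, i ≤ N → 0 ≤ t i := by
    intro i hi; rw [← ht0]; exact htle 0 i (Nat.zero_le _) hi
  -- the concave function
  set c : ℝ := Real.Gamma (2 - α) with hc
  have hcpos : 0 < c := Real.Gamma_pos_of_pos (by linarith)
  have hp0 : (0:ℝ) < 1 - α := by linarith
  have hp1 : (1:ℝ) - α < 1 := by linarith
  have hconc : ConcaveOn ℝ (Set.Ici 0) (fun x : ℝ => x ^ (1 - α)) :=
    (Real.strictConcaveOn_rpow hp0 hp1).concaveOn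
  have hkk : ∀ s : ℝ, kk (2 - α) s = s ^ (1 - α) / c := by
    intro s
    simp only [kk, hc]
    rw [show (2:ℝ) - α - 1 = 1 - α by ring]
  -- Kd rewritten
  have hKd : ∀ j : ℕ, Kd α t n j =
      ((t n - t (j - 1)) ^ (1 - α) - (t n - t j) ^ (1 - α)) / (t j - t (j - 1)) / c := by
    intro j
    simp only [Kd, hkk]
    field_simp
  -- nonnegativity of Kd
  have hKnonneg : ∀ j : ℕ, 1 ≤ j → j ≤ n → 0 ≤ Kd α t n j := by
    intro j hj1 hjn
    rw [hKd j]
    have hd : 0 < t j - t (j - 1) := by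
      have := hstep j hj1 (le_trans hjn hnN); linarith
    have h1 : t n - t j ≤ t n - t (j - 1) := by
      have := htle (j - 1) j (Nat.sub_le _ _) (le_trans hjn hnN); linarith
    have h2 : 0 ≤ t n - t j := by
      have := htle j n hjn hnN; linarith
    have hnum : (t n - t j) ^ (1 - α) ≤ (t n - t (j - 1)) ^ (1 - α) :=
      Real.rpow_le_rpow h2 h1 hp0.le
    exact div_nonneg (div_nonneg (by linarith) hd.le) hcpos.le
  -- monotonicity of Kd in j
  have hKmono : ∀ j : ℕ, 1 ≤ j → j + 1 ≤ n → Kd α t n j ≤ Kd α t n (j + 1) := by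
    intro j hj1 hjn
    rw [hKd j, hKd (j + 1)]
    have hjN : j + 1 ≤ N := le_trans hjn hnN
    have hx : t n - t (j + 1) ∈ Set.Ici (0:ℝ) := by
      have := htle (j + 1) n hjn hnN; simp; linarith
    have hz : t n - t (j - 1) ∈ Set.Ici (0:ℝ) := by
      have := htle (j - 1) n (by omega) hnN; simp; linarith
    have hxy : t n - t (j + 1) < t n - t j := by
      have := htlt j (j + 1) (by omega) hjN; linarith
    have hyz : t n - t j < t n - t (j - 1) := by
      have := htlt (j - 1) j (by omega) (by omega); linarith
    have key := hconc.slope_anti_adjacent hx hz hxy hyz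
    have e1 : t n - t (j - 1) - (t n - t j) = t j - t (j - 1) := by ring
    have e2 : t n - t j - (t n - t (j + 1)) = t (j + 1) - t j := by ring
    rw [e1, e2] at key
    have : (j + 1) - 1 = j := by omega
    rw [this]
    exact div_le_div_of_nonneg_right key hcpos.le
  -- energy argument
  set b : ℕ → ℝ := fun j => Kd α t n j with hb
  set W : ℕ → ℝ := fun j : ℕ => a (φ n - φ j) (φ n - φ j) with hWdef
  have hWnn : ∀ j, 0 ≤ W j := fun j => hpsd _
  have hWn : W n = 0 := by simp [hWdef]
  have habel := abel_aux b W hWnn n hn1 hKmono (hKnonneg 1 le_rfl hn1)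
  rw [hWn, mul_zero, add_zero] at habel
  have hid : ∀ j : ℕ, W (j - 1) - W j =
      2 * a (φ n) (φ j - φ (j - 1)) - (a (φ j) (φ j) - a (φ (j - 1)) (φ (j - 1))) := by
    intro j
    simp only [hWdef, map_sub, LinearMap.sub_apply]
    linarith [hsymm (φ n) (φ j), hsymm (φ n) (φ (j - 1)), hsymm (φ j) (φ (j - 1))]
  have hDd : ⟪Dd α t φ n, A (φ n)⟫ =
      ∑ j ∈ Finset.Icc 1 n, b j * a (φ n) (φ j - φ (j - 1)) := by
    simp only [Dd, sum_inner, real_inner_smul_left]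
    refine Finset.sum_congr rfl fun j _ => ?_
    rw [real_inner_comm, hA]
  rw [ge_iff_le, ← sub_nonneg, hDd]
  have heq : ∑ j ∈ Finset.Icc 1 n, b j * a (φ n) (φ j - φ (j - 1)) -
      (1 / 2) * ∑ j ∈ Finset.Icc 1 n,
        Kd α t n j * (a (φ j) (φ j) - a (φ (j - 1)) (φ (j - 1))) =
      (1 / 2) * ∑ j ∈ Finset.Icc 1 n, b j * (W (j - 1) - W j) := by
    rw [Finset.mul_sum, Finset.mul_sum, ← Finset.sum_sub_distrib]
    refine Finset.sum_congr rfl fun j _ => ?_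
    rw [hid j]
    ring
  rw [heq]
  linarith [habel]
end

section
/- Let T > 0, γ ≥ 1, σ ∈ (0,1], N ≥ 2 an integer, and t_i := (i/N)^γ T. Then for every 2 ≤ i ≤ N: t_{i−1}^{σ−1} Δt_i ≤ γ 2^{γ−1} T^σ (i−1)^{γσ−1} N^{−γσ} ≤ γ 2^{γ−1} T^σ N^{−min{γσ, 1}}. -/
/-- the weighted step bound `t_{i-1}^{σ-1} Δt_i ≤ γ 2^{γ-1} T^σ (i-1)^{γσ-1} N^{-γσ}
≤ γ 2^{γ-1} T^σ N^{-min{γσ,1}}` on the graded mesh `t_i = (i/N)^γ T`. -/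
theorem stmt16 (T γ σ : ℝ) (hT : 0 < T) (hγ : 1 ≤ γ) (hσ0 : 0 < σ) (hσ1 : σ ≤ 1)
    (N : ℕ) (hN : 2 ≤ N)
    (t : ℕ → ℝ) (ht : ∀ i, i ≤ N → t i = ((i : ℝ) / (N : ℝ)) ^ γ * T) :
    ∀ i, 2 ≤ i → i ≤ N →
      (t (i - 1)) ^ (σ - 1) * (t i - t (i - 1))
          ≤ γ * 2 ^ (γ - 1) * T ^ σ * ((i : ℝ) - 1) ^ (γ * σ - 1) * (N : ℝ) ^ (-(γ * σ)) ∧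
      γ * 2 ^ (γ - 1) * T ^ σ * ((i : ℝ) - 1) ^ (γ * σ - 1) * (N : ℝ) ^ (-(γ * σ))
          ≤ γ * 2 ^ (γ - 1) * T ^ σ * (N : ℝ) ^ (-(min (γ * σ) 1)) := by
  intro i hi2 hiN
  have hn0 : (0:ℝ) < (N:ℝ) := by positivity
  have hi2' : (2:ℝ) ≤ (i:ℝ) := by exact_mod_cast hi2
  have hiN' : (i:ℝ) ≤ (N:ℝ) := by exact_mod_cast hiN
  set n : ℝ := (N:ℝ) with hn
  set m : ℝ := (i:ℝ) - 1 with hmdef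
  have hm1 : (1:ℝ) ≤ m := by linarith
  have hm0 : (0:ℝ) < m := by linarith
  have hmi : m < (i:ℝ) := by linarith
  have hmn : m ≤ n := by linarith
  have hcast : ((i - 1 : ℕ) : ℝ) = m := by
    have h1 : 1 ≤ i := by omega
    push_cast [h1]; linarith
  have ht1 : t (i - 1) = (m / n) ^ γ * T := by
    rw [ht (i-1) (by omega), hcast]
  have ht2 : t i = ((i:ℝ) / n) ^ γ * T := ht i hiN
  -- MVT bound: i^γ - m^γ ≤ γ * 2^(γ-1) * m^(γ-1)
  have hkey : (i:ℝ) ^ γ - m ^ γ ≤ γ * (2 ^ (γ-1) * m ^ (γ-1)) := by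
    obtain ⟨c, hc, hderiv⟩ := exists_hasDerivAt_eq_slope (fun x : ℝ => x ^ γ)
      (fun x => γ * x ^ (γ - 1)) hmi
      (fun x _ => (Real.continuousAt_rpow_const x γ (Or.inr (by linarith))).continuousWithinAt)
      (fun x _ => Real.hasDerivAt_rpow_const (Or.inr hγ))
    have hc0 : 0 < c := lt_trans hm0 hc.1
    have hc2m : c ≤ 2 * m := by
      have : (i:ℝ) ≤ 2 * m := by linarith
      linarith [hc.2]
    have him : (i:ℝ) - m = 1 := by linarith
    rw [him, div_one] at hderiv
    have hle : c ^ (γ-1) ≤ (2*m) ^ (γ-1) :=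
      Real.rpow_le_rpow hc0.le hc2m (by linarith)
    rw [← hderiv, ← Real.mul_rpow (by norm_num) hm0.le]
    have hγ0 : (0:ℝ) ≤ γ := by linarith
    nlinarith [Real.rpow_pos_of_pos hc0 (γ-1)]
  constructor
  · rw [ht1, ht2]
    have hdiff : ((i:ℝ)/n) ^ γ * T - (m/n) ^ γ * T
        = ((i:ℝ)^γ - m^γ) / n^γ * T := by
      rw [Real.div_rpow (by linarith) hn0.le, Real.div_rpow hm0.le hn0.le]
      ring
    have hbase : (0:ℝ) < (m/n)^γ * T := by
      have := Real.rpow_pos_of_pos (div_pos hm0 hn0) γ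
      nlinarith
    have hpow_pos : (0:ℝ) < ((m/n)^γ * T) ^ (σ-1) := Real.rpow_pos_of_pos hbase _
    have hstep1 : ((m/n)^γ * T) ^ (σ-1) * (((i:ℝ)/n)^γ * T - (m/n)^γ * T)
        ≤ ((m/n)^γ * T) ^ (σ-1) * (γ * (2^(γ-1) * m^(γ-1)) / n^γ * T) := by
      rw [hdiff]
      apply mul_le_mul_of_nonneg_left _ hpow_pos.le
      apply mul_le_mul_of_nonneg_right _ hT.le
      exact div_le_div_of_nonneg_right hkey (Real.rpow_pos_of_pos hn0 γ).le
    refine hstep1.trans_eq ?_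
    have em : m ^ (γ*σ-1) = m^(γ*(σ-1)) * m^(γ-1) := by
      rw [← Real.rpow_add hm0]; ring_nf
    have en : n ^ (-(γ*σ)) = (n^(γ*(σ-1)))⁻¹ * (n^γ)⁻¹ := by
      rw [← Real.rpow_neg hn0.le, ← Real.rpow_neg hn0.le, ← Real.rpow_add hn0]
      ring_nf
    have eT : T ^ σ = T^(σ-1) * T := by
      rw [← Real.rpow_add_one hT.ne', sub_add_cancel]
    rw [Real.mul_rpow (by positivity) hT.le, Real.div_rpow hm0.le hn0.le,
        Real.div_rpow (Real.rpow_pos_of_pos hm0 γ).le (Real.rpow_pos_of_pos hn0 γ).le,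
        ← Real.rpow_mul hm0.le, ← Real.rpow_mul hn0.le, em, en, eT]
    have h1 : n^(γ*(σ-1)) ≠ 0 := (Real.rpow_pos_of_pos hn0 _).ne'
    have h2 : (n:ℝ)^γ ≠ 0 := (Real.rpow_pos_of_pos hn0 _).ne'
    field_simp
  · have hC : (0:ℝ) < γ * 2 ^ (γ-1) * T ^ σ :=
      mul_pos (mul_pos (by linarith) (Real.rpow_pos_of_pos two_pos _))
        (Real.rpow_pos_of_pos hT _)
    rw [mul_assoc (γ * 2 ^ (γ-1) * T ^ σ)]
    apply mul_le_mul_of_nonneg_left _ hC.le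
    rcases le_total (γ * σ) 1 with h | h
    · rw [min_eq_left h]
      have h1 : m ^ (γ*σ - 1) ≤ 1 :=
        Real.rpow_le_one_of_one_le_of_nonpos hm1 (by linarith)
      have h2 := Real.rpow_pos_of_pos hn0 (-(γ*σ))
      nlinarith
    · rw [min_eq_right h]
      have h1 : m ^ (γ*σ - 1) ≤ n ^ (γ*σ - 1) :=
        Real.rpow_le_rpow hm0.le hmn (by linarith)
      have h2 : n ^ (γ*σ-1) * n ^ (-(γ*σ)) = n ^ (-(1:ℝ)) := by
        rw [← Real.rpow_add hn0]; ring_nf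
      calc m ^ (γ*σ-1) * n ^ (-(γ*σ)) ≤ n ^ (γ*σ-1) * n ^ (-(γ*σ)) :=
            mul_le_mul_of_nonneg_right h1 (Real.rpow_pos_of_pos hn0 _).le
        _ = n ^ (-(1:ℝ)) := h2
end

section
/- Let T > 0, γ ≥ 1, σ ∈ (0,1], α ∈ (0,1). There exists a constant C > 0, depending only on γ, σ, α, and T, such that for every integer N ≥ 3 and every 3 ≤ i ≤ N, the graded mesh t_i = (i/N)^γ T satisfies (t_i − t_1)^α · t_{i−2}^{σ−2} · Δt_i^{3−α} / Δt_{i−1} ≤ C N^{−min{γσ, 2−α}}. -/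
private lemma bern_up {a b γ : ℝ} (ha : 0 ≤ a) (hab : a ≤ b) (hγ : 1 ≤ γ) :
    b ^ γ - a ^ γ ≤ γ * b ^ (γ - 1) * (b - a) := by
  rcases (ha.trans hab).eq_or_lt with hb | hb
  · have ha0 : a = 0 := le_antisymm (hab.trans hb.symm.le) ha
    rw [ha0, ← hb, Real.zero_rpow (by linarith : γ ≠ 0)]
    simp
  · have hs : -1 ≤ (a - b) / b := by
      rw [neg_le, ← neg_div, div_le_one hb]
      linarith
    have key := one_add_mul_self_le_rpow_one_add hs hγ
    have h1 : 1 + (a - b) / b = a / b := by field_simp; ring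
    rw [h1, Real.div_rpow ha hb.le] at key
    have hbγ : (0:ℝ) < b ^ γ := Real.rpow_pos_of_pos hb _
    have key2 := mul_le_mul_of_nonneg_right key hbγ.le
    rw [div_mul_cancel₀ _ hbγ.ne'] at key2
    have h3 : b ^ (γ - 1) = b ^ γ / b := by
      rw [Real.rpow_sub hb, Real.rpow_one]
    have h4 : (1 + γ * ((a - b) / b)) * b ^ γ = b ^ γ - γ * (b ^ γ / b) * (b - a) := by
      field_simp
      ring
    rw [h4, ← h3] at key2
    linarith

private lemma bern_low {a b γ : ℝ} (ha : 0 < a) (hab : a ≤ b) (hγ : 1 ≤ γ) :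
    γ * a ^ (γ - 1) * (b - a) ≤ b ^ γ - a ^ γ := by
  have hs : -1 ≤ (b - a) / a := le_trans (by norm_num) (div_nonneg (by linarith) ha.le)
  have key := one_add_mul_self_le_rpow_one_add hs hγ
  have h1 : 1 + (b - a) / a = b / a := by field_simp; ring
  rw [h1, Real.div_rpow (ha.le.trans hab) ha.le] at key
  have haγ : (0:ℝ) < a ^ γ := Real.rpow_pos_of_pos ha _
  have key2 := mul_le_mul_of_nonneg_right key haγ.le
  rw [div_mul_cancel₀ _ haγ.ne'] at key2
  have h3 : a ^ (γ - 1) = a ^ γ / a := by rw [Real.rpow_sub ha, Real.rpow_one]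
  have h4 : (1 + γ * ((b - a) / a)) * a ^ γ = a ^ γ + γ * (a ^ γ / a) * (b - a) := by
    field_simp
  rw [h4, ← h3] at key2
  linarith

private lemma alg_eq {T γ σ α u n : ℝ} (hT : 0 < T) (hγ : 0 < γ) (hu : 0 < u) (hn : 0 < n) :
    (u ^ γ * T) ^ α * ((u / 3) ^ γ * T) ^ (σ - 2) * (γ * u ^ (γ - 1) * (1 / n) * T) ^ (3 - α)
        / (γ * (u / 3) ^ (γ - 1) * (1 / n) * T)
      = T ^ σ * γ ^ (2 - α) * (3:ℝ) ^ (3 * γ - 1 - γ * σ) * u ^ (γ * σ + α - 2) * n ^ (α - 2) := by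
  have hu3 : (0:ℝ) < u / 3 := by positivity
  have h30 : (0:ℝ) < 3 := by norm_num
  have hL : (0:ℝ) < (u ^ γ * T) ^ α * ((u / 3) ^ γ * T) ^ (σ - 2)
      * (γ * u ^ (γ - 1) * (1 / n) * T) ^ (3 - α) / (γ * (u / 3) ^ (γ - 1) * (1 / n) * T) := by
    positivity
  have hR : (0:ℝ) < T ^ σ * γ ^ (2 - α) * (3:ℝ) ^ (3 * γ - 1 - γ * σ)
      * u ^ (γ * σ + α - 2) * n ^ (α - 2) := by positivity
  apply Real.log_injOn_pos (Set.mem_Ioi.2 hL) (Set.mem_Ioi.2 hR)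
  have e1 : Real.log ((u ^ γ * T) ^ α) = α * (γ * Real.log u + Real.log T) := by
    rw [Real.log_rpow (by positivity), Real.log_mul (by positivity) hT.ne',
      Real.log_rpow hu]
  have e2 : Real.log (((u / 3) ^ γ * T) ^ (σ - 2))
      = (σ - 2) * (γ * (Real.log u - Real.log 3) + Real.log T) := by
    rw [Real.log_rpow (by positivity), Real.log_mul (by positivity) hT.ne',
      Real.log_rpow hu3, Real.log_div hu.ne' (by norm_num)]
  have e3 : Real.log ((γ * u ^ (γ - 1) * (1 / n) * T) ^ (3 - α))
      = (3 - α) * (Real.log γ + (γ - 1) * Real.log u - Real.log n + Real.log T) := by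
    rw [Real.log_rpow (by positivity), Real.log_mul (by positivity) hT.ne',
      Real.log_mul (by positivity) (by positivity), Real.log_mul hγ.ne' (by positivity),
      Real.log_rpow hu, one_div, Real.log_inv]
    ring
  have e4 : Real.log (γ * (u / 3) ^ (γ - 1) * (1 / n) * T)
      = Real.log γ + (γ - 1) * (Real.log u - Real.log 3) - Real.log n + Real.log T := by
    rw [Real.log_mul (by positivity) hT.ne', Real.log_mul (by positivity) (by positivity),
      Real.log_mul hγ.ne' (by positivity), Real.log_rpow hu3, one_div, Real.log_inv,
      Real.log_div hu.ne' (by norm_num)]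
    ring
  rw [Real.log_div (by positivity) (by positivity), Real.log_mul (by positivity) (by positivity),
    Real.log_mul (by positivity) (by positivity), e1, e2, e3, e4,
    Real.log_mul (by positivity) (by positivity), Real.log_mul (by positivity) (by positivity),
    Real.log_mul (by positivity) (by positivity), Real.log_mul (by positivity) (by positivity),
    Real.log_rpow hT, Real.log_rpow hγ, Real.log_rpow h30, Real.log_rpow hu, Real.log_rpow hn]
  ring

/-- the key graded-mesh estimate
`(t_i - t_1)^α t_{i-2}^{σ-2} Δt_i^{3-α} / Δt_{i-1} ≤ C N^{-min{γσ, 2-α}}`. -/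
theorem stmt18 (T γ σ α : ℝ) (hT : 0 < T) (hγ : 1 ≤ γ) (hσ0 : 0 < σ) (hσ1 : σ ≤ 1)
    (hα0 : 0 < α) (hα1 : α < 1) :
    ∃ C : ℝ, 0 < C ∧ ∀ N : ℕ, 3 ≤ N → ∀ i : ℕ, 3 ≤ i → i ≤ N →
      ∀ t : ℕ → ℝ, (∀ k, k ≤ N → t k = ((k : ℝ) / (N : ℝ)) ^ γ * T) →
        (t i - t 1) ^ α * (t (i - 2)) ^ (σ - 2) * (t i - t (i - 1)) ^ (3 - α)
            / (t (i - 1) - t (i - 2))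
          ≤ C * (N : ℝ) ^ (-(min (γ * σ) (2 - α))) := by
  have hγ0 : (0:ℝ) < γ := by linarith
  have h3α : (0:ℝ) ≤ 3 - α := by linarith
  refine ⟨T ^ σ * γ ^ (2 - α) * (3:ℝ) ^ (3 * γ - 1 - γ * σ), by positivity, ?_⟩
  intro N hN i hi3 hiN t ht
  set n : ℝ := (N : ℝ) with hn
  set x : ℝ := (i : ℝ) with hx
  have hn3 : (3:ℝ) ≤ n := by rw [hn]; exact_mod_cast hN
  have hx3 : (3:ℝ) ≤ x := by rw [hx]; exact_mod_cast hi3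
  have hxn : x ≤ n := by rw [hx, hn]; exact_mod_cast hiN
  have hn0 : (0:ℝ) < n := by linarith
  have hx0 : (0:ℝ) < x := by linarith
  have hti : t i = (x / n) ^ γ * T := ht i hiN
  have ht1 : t 1 = (1 / n) ^ γ * T := by
    have h := ht 1 (by omega)
    rw [h, Nat.cast_one]
  have hti1 : t (i - 1) = ((x - 1) / n) ^ γ * T := by
    have h := ht (i - 1) (by omega)
    rw [h, Nat.cast_sub (by omega : 1 ≤ i), Nat.cast_one]
  have hti2 : t (i - 2) = ((x - 2) / n) ^ γ * T := by
    have h := ht (i - 2) (by omega)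
    rw [h, Nat.cast_sub (by omega : 2 ≤ i)]
    norm_num
    exact Or.inl rfl
  set u : ℝ := x / n with hu
  have hu0 : (0:ℝ) < u := by rw [hu]; positivity
  have hu1 : u ≤ 1 := by rw [hu, div_le_one hn0]; exact hxn
  have hx1n : (0:ℝ) ≤ (x - 1) / n := div_nonneg (by linarith) hn0.le
  have hx2n : (0:ℝ) < (x - 2) / n := div_pos (by linarith) hn0
  have hx23 : u / 3 ≤ (x - 2) / n := by
    have h : x / 3 ≤ x - 2 := by linarith
    calc u / 3 = (x / 3) / n := by rw [hu]; ring
      _ ≤ (x - 2) / n := by gcongr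
  -- factor 1
  have h1 : (t i - t 1) ^ α ≤ (u ^ γ * T) ^ α := by
    apply Real.rpow_le_rpow _ _ hα0.le
    · rw [hti, ht1]
      have h0 : (1 / n) ^ γ ≤ u ^ γ := by
        apply Real.rpow_le_rpow (by positivity) _ hγ0.le
        rw [hu]
        gcongr
        linarith
      have := mul_le_mul_of_nonneg_right h0 hT.le
      linarith
    · rw [hti, ht1]
      have h0 : (0:ℝ) ≤ (1 / n) ^ γ * T :=
        mul_nonneg (Real.rpow_nonneg (by positivity) γ) hT.le
      linarith
  -- factor 2
  have h2 : (t (i - 2)) ^ (σ - 2) ≤ ((u / 3) ^ γ * T) ^ (σ - 2) := by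
    apply Real.rpow_le_rpow_of_nonpos (by positivity) _ (by linarith)
    rw [hti2]
    have h0 : (u / 3) ^ γ ≤ ((x - 2) / n) ^ γ :=
      Real.rpow_le_rpow (by positivity) hx23 hγ0.le
    exact mul_le_mul_of_nonneg_right h0 hT.le
  -- factor 3
  have hmono : ((x - 1) / n) ^ γ ≤ u ^ γ := by
    apply Real.rpow_le_rpow hx1n _ hγ0.le
    rw [hu]; gcongr; linarith
  have hstep : u ^ γ - ((x - 1) / n) ^ γ ≤ γ * u ^ (γ - 1) * (1 / n) := by
    have hb := bern_up (a := (x - 1) / n) (b := u) hx1n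
      (by rw [hu]; gcongr; linarith) hγ
    have hd : u - (x - 1) / n = 1 / n := by rw [hu]; ring
    rw [hd] at hb
    exact hb
  have h3 : (t i - t (i - 1)) ^ (3 - α) ≤ (γ * u ^ (γ - 1) * (1 / n) * T) ^ (3 - α) := by
    apply Real.rpow_le_rpow _ _ h3α
    · rw [hti, hti1]
      have := mul_le_mul_of_nonneg_right hmono hT.le
      linarith
    · calc t i - t (i - 1) = (u ^ γ - ((x - 1) / n) ^ γ) * T := by rw [hti, hti1]; ring
        _ ≤ γ * u ^ (γ - 1) * (1 / n) * T := mul_le_mul_of_nonneg_right hstep hT.le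
  -- denominator
  have hD0 : (0:ℝ) < γ * (u / 3) ^ (γ - 1) * (1 / n) * T := by positivity
  have h4 : γ * (u / 3) ^ (γ - 1) * (1 / n) * T ≤ t (i - 1) - t (i - 2) := by
    have hb := bern_low (a := (x - 2) / n) (b := (x - 1) / n) hx2n (by gcongr; linarith) hγ
    have hd : (x - 1) / n - (x - 2) / n = 1 / n := by ring
    rw [hd] at hb
    have hm : (u / 3) ^ (γ - 1) ≤ ((x - 2) / n) ^ (γ - 1) :=
      Real.rpow_le_rpow (by positivity) hx23 (by linarith)
    calc γ * (u / 3) ^ (γ - 1) * (1 / n) * T ≤ γ * ((x - 2) / n) ^ (γ - 1) * (1 / n) * T := by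
          gcongr
      _ ≤ (((x - 1) / n) ^ γ - ((x - 2) / n) ^ γ) * T := mul_le_mul_of_nonneg_right hb hT.le
      _ = t (i - 1) - t (i - 2) := by rw [hti1, hti2]; ring
  have hQ : (t i - t 1) ^ α * (t (i - 2)) ^ (σ - 2) * (t i - t (i - 1)) ^ (3 - α)
        / (t (i - 1) - t (i - 2))
      ≤ (u ^ γ * T) ^ α * ((u / 3) ^ γ * T) ^ (σ - 2)
        * (γ * u ^ (γ - 1) * (1 / n) * T) ^ (3 - α) / (γ * (u / 3) ^ (γ - 1) * (1 / n) * T) := by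
    apply div_le_div₀ (by positivity) _ hD0 h4
    have ht2pos : (0:ℝ) < t (i - 2) := by rw [hti2]; positivity
    have hstep0 : (0:ℝ) ≤ t i - t (i - 1) := by
      rw [hti, hti1]
      have := mul_le_mul_of_nonneg_right hmono hT.le
      linarith
    apply mul_le_mul _ h3 (Real.rpow_nonneg hstep0 _) (by positivity)
    apply mul_le_mul h1 h2 (Real.rpow_nonneg ht2pos.le _) (by positivity)
  refine hQ.trans ?_
  rw [alg_eq hT hγ0 hu0 hn0]
  have key : u ^ (γ * σ + α - 2) * n ^ (α - 2) ≤ n ^ (-min (γ * σ) (2 - α)) := by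
    rcases le_or_gt 0 (γ * σ + α - 2) with hβ | hβ
    · have hmin : min (γ * σ) (2 - α) = 2 - α := min_eq_right (by linarith)
      have h6 : n ^ (α - 2) = n ^ (-(2 - α)) := by congr 1; ring
      rw [hmin, h6]
      have h5 : u ^ (γ * σ + α - 2) ≤ 1 := Real.rpow_le_one hu0.le hu1 hβ
      calc u ^ (γ * σ + α - 2) * n ^ (-(2 - α)) ≤ 1 * n ^ (-(2 - α)) :=
            mul_le_mul_of_nonneg_right h5 (Real.rpow_nonneg hn0.le _)
        _ = n ^ (-(2 - α)) := one_mul _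
    · have hmin : min (γ * σ) (2 - α) = γ * σ := min_eq_left (by linarith)
      rw [hmin]
      have hun : 1 / n ≤ u := by
        rw [hu]; gcongr; linarith
      have h5 : u ^ (γ * σ + α - 2) ≤ (1 / n) ^ (γ * σ + α - 2) :=
        Real.rpow_le_rpow_of_nonpos (by positivity) hun hβ.le
      have h6 : (1 / n) ^ (γ * σ + α - 2) = n ^ (-(γ * σ + α - 2)) := by
        rw [one_div, Real.inv_rpow hn0.le, ← Real.rpow_neg hn0.le]
      calc u ^ (γ * σ + α - 2) * n ^ (α - 2)
          ≤ n ^ (-(γ * σ + α - 2)) * n ^ (α - 2) :=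
            mul_le_mul_of_nonneg_right (h5.trans_eq h6) (Real.rpow_nonneg hn0.le _)
        _ = n ^ (-(γ * σ)) := by rw [← Real.rpow_add hn0]; congr 1; ring
  calc T ^ σ * γ ^ (2 - α) * (3:ℝ) ^ (3 * γ - 1 - γ * σ) * u ^ (γ * σ + α - 2) * n ^ (α - 2)
      = T ^ σ * γ ^ (2 - α) * (3:ℝ) ^ (3 * γ - 1 - γ * σ)
        * (u ^ (γ * σ + α - 2) * n ^ (α - 2)) := by ring
    _ ≤ T ^ σ * γ ^ (2 - α) * (3:ℝ) ^ (3 * γ - 1 - γ * σ) * n ^ (-min (γ * σ) (2 - α)) :=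
        mul_le_mul_of_nonneg_left key (by positivity)
end
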